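/- Let A = T(V)/(R) be a quadratic algebra with char(k) ≠ 2. Then HK_2(A)_0 = R ∩ ant(V⊗V), HK_1(A)_1 = ant^{−1}(R)/sym(R), and HK_0(A)_2 ≅ (V⊗V)/(ant(V⊗V) + R), where ant and sym are the antisymmetrization and symmetrization projections of V⊗V. -/
import Mathlib


/- STATEMENT 12: Let `A = T(V)/(R)` be a quadratic algebra, `char k ≠ 2`.  In low biweights,
the Koszul homology is: `HK_2(A)_0 = R ∩ ant(V⊗V)`, `HK_1(A)_1 = ant⁻¹(R)/sym(R)` and
`HK_0(A)_2 ≅ (V⊗V)/(ant(V⊗V) + R)`.  Here the relevant components of the Koszul chain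
complex are `d₂ = (1 + τ)|_R : R → V⊗V` (biweight `(2,0) → (1,1)`) and
`d₁ = mkQ ∘ (1 − τ) : V⊗V → (V⊗V)/R = A_2` (biweight `(1,1) → (0,2)`),
where `τ` is the flip of `V ⊗ V`. -/

open TensorProduct

variable {k V : Type*} [Field k] [AddCommGroup V] [Module k V]

/-- The flip of `V ⊗ V`. -/
noncomputable def tau : (V ⊗[k] V) →ₗ[k] (V ⊗[k] V) := (TensorProduct.comm k V V).toLinearMap

/-- The antisymmetrization projection `ant(x⊗y) = (x⊗y − y⊗x)/2`. -/
noncomputable def antP : (V ⊗[k] V) →ₗ[k] (V ⊗[k] V) :=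
  (2 : k)⁻¹ • (LinearMap.id - tau)

/-- The symmetrization projection `sym(x⊗y) = (x⊗y + y⊗x)/2`. -/
noncomputable def symP : (V ⊗[k] V) →ₗ[k] (V ⊗[k] V) :=
  (2 : k)⁻¹ • (LinearMap.id + tau)

/-- The Koszul differential in biweight `(2,0)`:
`b_K(1 ⊗ x₁x₂) = x₁ ⊗ x₂ + x₂ ⊗ x₁` on `W_2 = R`. -/
noncomputable def dtwo (R : Submodule k (V ⊗[k] V)) : R →ₗ[k] (V ⊗[k] V) :=
  (LinearMap.id + tau) ∘ₗ R.subtype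

/-- The Koszul differential in biweight `(1,1)`:
`b_K(a ⊗ x) = a·x − x·a ∈ A_2 = (V⊗V)/R` on `A_1 ⊗ W_1 = V ⊗ V`. -/
noncomputable def done (R : Submodule k (V ⊗[k] V)) : (V ⊗[k] V) →ₗ[k] ((V ⊗[k] V) ⧸ R) :=
  R.mkQ ∘ₗ (LinearMap.id - tau)

theorem koszul_homology_low_biweights (R : Submodule k (V ⊗[k] V)) (h2 : (2 : k) ≠ 0) :
    -- `HK_2(A)_0 = R ∩ ant(V⊗V)`
    (Submodule.map R.subtype (LinearMap.ker (dtwo R))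
        = R ⊓ LinearMap.range (antP (k := k) (V := V))) ∧
    -- cycles in biweight `(1,1)` are `ant⁻¹(R)` …
    (LinearMap.ker (done R) = Submodule.comap (antP (k := k) (V := V)) R) ∧
    -- … boundaries are `sym(R)`, so `HK_1(A)_1 = ant⁻¹(R)/sym(R)`
    (LinearMap.range (dtwo R) = Submodule.map (symP (k := k) (V := V)) R) ∧
    -- `HK_0(A)_2 ≅ (V⊗V)/(ant(V⊗V) + R)`
    Nonempty (((((V ⊗[k] V) ⧸ R)) ⧸ LinearMap.range (done R))
        ≃ₗ[k] ((V ⊗[k] V) ⧸ (LinearMap.range (antP (k := k) (V := V)) ⊔ R))) := by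
  have tau_tau : ∀ x : V ⊗[k] V, tau (k := k) (tau x) = x := by
    intro x
    induction x using TensorProduct.induction_on with
    | zero => simp
    | tmul a b => simp [tau]
    | add a b ha hb => simp [map_add, ha, hb]
  have antP_apply : ∀ x : V ⊗[k] V, antP (k := k) x = (2 : k)⁻¹ • (x - tau x) := by
    intro x; simp [antP]
  have symP_apply : ∀ x : V ⊗[k] V, symP (k := k) x = (2 : k)⁻¹ • (x + tau x) := by
    intro x; simp [symP]
  have two_smul_antP : ∀ x : V ⊗[k] V, (2 : k) • antP (k := k) x = x - tau x := by
    intro x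
    rw [antP_apply, smul_smul, mul_inv_cancel₀ h2, one_smul]
  have two_smul_symP : ∀ x : V ⊗[k] V, (2 : k) • symP (k := k) x = x + tau x := by
    intro x
    rw [symP_apply, smul_smul, mul_inv_cancel₀ h2, one_smul]
  have tau_antP : ∀ x : V ⊗[k] V, tau (k := k) (antP (k := k) x) = - antP (k := k) x := by
    intro x
    rw [antP_apply, map_smul, map_sub, tau_tau, ← smul_neg, neg_sub]
  refine ⟨?_, ?_, ?_, ?_⟩
  · -- part 1
    ext x
    simp only [Submodule.mem_map, LinearMap.mem_ker, Submodule.mem_inf, LinearMap.mem_range]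
    constructor
    · rintro ⟨⟨r, hr⟩, hker, rfl⟩
      have h0 : r + tau (k := k) r = 0 := by
        simpa [dtwo] using hker
      refine ⟨hr, r, ?_⟩
      have htau : tau (k := k) r = -r := (neg_eq_of_add_eq_zero_right h0).symm
      rw [antP_apply, htau, sub_neg_eq_add, ← two_smul k r, smul_smul,
        inv_mul_cancel₀ h2, one_smul]
      rfl
    · rintro ⟨hx, y, rfl⟩
      refine ⟨⟨antP (k := k) y, hx⟩, ?_, rfl⟩
      simp only [dtwo, LinearMap.coe_comp, Function.comp_apply, Submodule.coe_subtype,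
        LinearMap.add_apply, LinearMap.id_apply]
      rw [tau_antP, add_neg_cancel]
  · -- part 2
    ext x
    simp only [LinearMap.mem_ker, Submodule.mem_comap, done, LinearMap.coe_comp,
      Function.comp_apply, LinearMap.sub_apply, LinearMap.id_apply,
      Submodule.mkQ_apply, Submodule.Quotient.mk_eq_zero]
    rw [antP_apply, Submodule.smul_mem_iff _ (inv_ne_zero h2)]
  · -- part 3
    ext x
    simp only [LinearMap.mem_range, Submodule.mem_map]
    constructor
    · rintro ⟨⟨r, hr⟩, rfl⟩
      refine ⟨(2 : k) • r, R.smul_mem _ hr, ?_⟩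
      rw [map_smul, two_smul_symP]
      simp [dtwo]
    · rintro ⟨r, hr, rfl⟩
      refine ⟨⟨(2 : k)⁻¹ • r, R.smul_mem _ hr⟩, ?_⟩
      simp only [dtwo, LinearMap.coe_comp, Function.comp_apply, Submodule.coe_subtype,
        LinearMap.add_apply, LinearMap.id_apply, map_smul]
      rw [symP_apply, smul_add]
  · -- part 4
    have hrange : LinearMap.range (done R)
        = (LinearMap.range (antP (k := k) (V := V))).map R.mkQ := by
      ext z
      simp only [LinearMap.mem_range, Submodule.mem_map]
      constructor
      · rintro ⟨x, rfl⟩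
        refine ⟨antP (k := k) ((2 : k) • x), ⟨_, rfl⟩, ?_⟩
        rw [map_smul, two_smul_antP]
        simp [done]
      · rintro ⟨_, ⟨y, rfl⟩, rfl⟩
        refine ⟨(2 : k)⁻¹ • y, ?_⟩
        simp only [done, LinearMap.coe_comp, Function.comp_apply, LinearMap.sub_apply,
          LinearMap.id_apply]
        rw [antP_apply]
        congr 1
        rw [map_smul, smul_sub]
    refine ⟨(Submodule.quotEquivOfEq _ _ hrange).trans
      ((Submodule.quotientQuotientEquivQuotientSup R _).trans
        (Submodule.quotEquivOfEq _ _ (sup_comm _ _)))⟩
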